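/- There is a positive absolute constant C such that the following holds. For every ψ ∈ Ψ₁ and every s ∈ Ω₁, one has |F(s,ψ)·G(s,ψ) − 1| ≤ C·𝓛^{-227}. -/

import Mathlib

open scoped Classical

noncomputable section

/-- The Dirichlet L-function of `χ` (extended to modulus `0` by `0`, a case never used below). -/
def Lfun {N : ℕ} (χ : DirichletCharacter ℂ N) (s : ℂ) : ℂ :=
  if h : N = 0 then 0
  else
    haveI : NeZero N := ⟨h⟩
    DirichletCharacter.LFunction χ s

/-- A Dirichlet character is *real* if all of its values are real numbers. -/
def IsRealChar {N : ℕ} (χ : DirichletCharacter ℂ N) : Prop :=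
  ∀ a : ZMod N, (χ a).im = 0

/-- `𝓛 = log D`. -/
def bigL (D : ℕ) : ℝ := Real.log D

/-- `P = exp (𝓛 ^ 9)`. -/
def bigP (D : ℕ) : ℝ := Real.exp (bigL D ^ 9)

/-- Assumption (A): `L(1, χ) < 𝓛 ^ (-2022)`. -/
def AssumptionA (D : ℕ) (χ : DirichletCharacter ℂ D) : Prop :=
  (Lfun χ 1).re < bigL D ^ (-2022 : ℤ)

/-- `p ~ P`, i.e. `p` is a prime with `P < p < P * (1 + 𝓛 ^ (-68))`. -/
def SimP (D p : ℕ) : Prop :=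
  p.Prime ∧ bigP D < (p : ℝ) ∧ (p : ℝ) < bigP D * (1 + bigL D ^ (-68 : ℤ))

/-- The finite set of primes `p ~ P`. -/
def primesP (D : ℕ) : Finset ℕ :=
  (Finset.range ⌈2 * bigP D⌉₊).filter (SimP D)

/-- `𝒫 = ∑_{p ~ P} p`. -/
def calP (D : ℕ) : ℝ := ∑ p ∈ primesP D, (p : ℝ)

/-- `ν(n) = ∑_{d ∣ n} χ(d)`. -/
def nuF (D : ℕ) (χ : DirichletCharacter ℂ D) (n : ℕ) : ℂ :=
  ∑ d ∈ n.divisors, χ (d : ZMod D)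

/-- `υ(n) = ∑_{ab = n} μ(a) μ(b) χ(b)`. -/
def upsF (D : ℕ) (χ : DirichletCharacter ℂ D) (n : ℕ) : ℂ :=
  ∑ d ∈ n.divisors,
    ((ArithmeticFunction.moebius (n / d) : ℤ) : ℂ) * ((ArithmeticFunction.moebius d : ℤ) : ℂ) *
      χ (d : ZMod D)

/-- `t₀ = 𝓛 ^ 519`. -/
def t0 (D : ℕ) : ℝ := bigL D ^ 519

/-- `s₀ = 1/2 + 2 π i t₀`. -/
def s0 (D : ℕ) : ℂ := 1 / 2 + 2 * (Real.pi : ℂ) * Complex.I * (t0 D : ℂ)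

/-- `𝓛₁ = 𝓛 ^ 405`. -/
def bigL1 (D : ℕ) : ℝ := bigL D ^ 405

/-- `ν` truncated to `n ≤ D ^ 4`, as an arithmetic function. -/
def nuT (D : ℕ) (χ : DirichletCharacter ℂ D) : ArithmeticFunction ℂ :=
  ⟨fun n => if n = 0 then 0 else if n ≤ D ^ 4 then nuF D χ n else 0, by simp⟩

/-- `υ` truncated to `n ≤ D ^ 4`, as an arithmetic function. -/
def upsT (D : ℕ) (χ : DirichletCharacter ℂ D) : ArithmeticFunction ℂ :=
  ⟨fun n => if n = 0 then 0 else if n ≤ D ^ 4 then upsF D χ n else 0, by simp⟩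

/-- `ν₂₀`, the 20-fold Dirichlet convolution of the truncation of `ν`. -/
def nu20 (D : ℕ) (χ : DirichletCharacter ℂ D) (n : ℕ) : ℂ := (nuT D χ ^ 20) n

/-- `υ₂₀`, the 20-fold Dirichlet convolution of the truncation of `υ`. -/
def ups20 (D : ℕ) (χ : DirichletCharacter ℂ D) (n : ℕ) : ℂ := (upsT D χ ^ 20) n

/-- `ς(n) = ∑_{lm = n, l ≤ D⁴, m ≤ D⁴} ν(l) υ(m)`. -/
def sigF (D : ℕ) (χ : DirichletCharacter ℂ D) (n : ℕ) : ℂ :=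
  ∑ d ∈ n.divisors,
    if d ≤ D ^ 4 ∧ n / d ≤ D ^ 4 then nuF D χ d * upsF D χ (n / d) else 0

/-- `X₁(x, ψ) = ∑_{n ≤ x} ν₂₀(n) ψ(n) n^{-s₀}`. -/
def X1 (D : ℕ) (χ : DirichletCharacter ℂ D) {p : ℕ} (ψ : DirichletCharacter ℂ p) (x : ℝ) : ℂ :=
  ∑ n ∈ Finset.Icc 1 ⌊x⌋₊, nu20 D χ n * ψ (n : ZMod p) * (n : ℂ) ^ (-s0 D)

/-- `X₂(x, ψ) = ∑_{n ≤ x} υ₂₀(n) ψ(n) n^{-s₀}`. -/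
def X2 (D : ℕ) (χ : DirichletCharacter ℂ D) {p : ℕ} (ψ : DirichletCharacter ℂ p) (x : ℝ) : ℂ :=
  ∑ n ∈ Finset.Icc 1 ⌊x⌋₊, ups20 D χ n * ψ (n : ZMod p) * (n : ℂ) ^ (-s0 D)

/-- `X₃(x, ψ) = ∑_{D⁴ < n ≤ x} ν(n) ψ(n) n^{-s₀}`. -/
def X3 (D : ℕ) (χ : DirichletCharacter ℂ D) {p : ℕ} (ψ : DirichletCharacter ℂ p) (x : ℝ) : ℂ :=
  ∑ n ∈ Finset.Ioc (D ^ 4) ⌊x⌋₊, nuF D χ n * ψ (n : ZMod p) * (n : ℂ) ^ (-s0 D)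

/-- `X₄(x, ψ) = ∑_{D⁴ < n ≤ x} ς(n) ψ(n) n^{-s₀}`. -/
def X4 (D : ℕ) (χ : DirichletCharacter ℂ D) {p : ℕ} (ψ : DirichletCharacter ℂ p) (x : ℝ) : ℂ :=
  ∑ n ∈ Finset.Ioc (D ^ 4) ⌊x⌋₊, sigF D χ n * ψ (n : ZMod p) * (n : ℂ) ^ (-s0 D)

/-- Inequality (3.4). -/
def Ineq1 (D : ℕ) (χ : DirichletCharacter ℂ D) {p : ℕ} (ψ : DirichletCharacter ℂ p) : Prop :=
  ‖X1 D χ ψ ((D : ℝ) ^ 80)‖ + ‖X2 D χ ψ ((D : ℝ) ^ 80)‖ +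
      (∫ x in (1 : ℝ)..((D : ℝ) ^ 80), (‖X1 D χ ψ x‖ + ‖X2 D χ ψ x‖) / x) <
    bigL D ^ 1171

/-- Inequality (3.5). -/
def Ineq2 (D : ℕ) (χ : DirichletCharacter ℂ D) {p : ℕ} (ψ : DirichletCharacter ℂ p) : Prop :=
  ‖X3 D χ ψ (bigP D ^ 2)‖ + (∫ x in ((D : ℝ) ^ 4)..(bigP D ^ 2), ‖X3 D χ ψ x‖ / x) <
    bigL D ^ (-585 : ℤ)

/-- Inequality (3.6). -/
def Ineq3 (D : ℕ) (χ : DirichletCharacter ℂ D) {p : ℕ} (ψ : DirichletCharacter ℂ p) : Prop :=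
  ‖X4 D χ ψ ((D : ℝ) ^ 8)‖ + (∫ x in ((D : ℝ) ^ 4)..((D : ℝ) ^ 8), ‖X4 D χ ψ x‖ / x) <
    bigL D ^ (-633 : ℤ)

/-- Membership in `Ψ₁`: `ψ` is a primitive character mod `p` with `p ~ P` satisfying
(3.4), (3.5) and (3.6). -/
def MemPsi1 (D : ℕ) (χ : DirichletCharacter ℂ D) {p : ℕ} (ψ : DirichletCharacter ℂ p) : Prop :=
  SimP D p ∧ ψ.IsPrimitive ∧ Ineq1 D χ ψ ∧ Ineq2 D χ ψ ∧ Ineq3 D χ ψ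

/-- `F(s, ψ) = ∑_{n ≤ D⁴} ν(n) ψ(n) n^{-s}`. -/
def Ffun (D : ℕ) (χ : DirichletCharacter ℂ D) {p : ℕ} (ψ : DirichletCharacter ℂ p) (s : ℂ) : ℂ :=
  ∑ n ∈ Finset.Icc 1 (D ^ 4), nuF D χ n * ψ (n : ZMod p) * (n : ℂ) ^ (-s)

/-- `G(s, ψ) = ∑_{n ≤ D⁴} υ(n) ψ(n) n^{-s}`. -/
def Gfun (D : ℕ) (χ : DirichletCharacter ℂ D) {p : ℕ} (ψ : DirichletCharacter ℂ p) (s : ℂ) : ℂ :=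
  ∑ n ∈ Finset.Icc 1 (D ^ 4), upsF D χ n * ψ (n : ZMod p) * (n : ℂ) ^ (-s)

/-- `F'(s, ψ) = -∑_{n ≤ D⁴} ν(n) ψ(n) (log n) n^{-s}`, the derivative of `F` in `s`. -/
def Ffun' (D : ℕ) (χ : DirichletCharacter ℂ D) {p : ℕ} (ψ : DirichletCharacter ℂ p) (s : ℂ) : ℂ :=
  -∑ n ∈ Finset.Icc 1 (D ^ 4),
    nuF D χ n * ψ (n : ZMod p) * ((Real.log n : ℝ) : ℂ) * (n : ℂ) ^ (-s)

/-- `F(1 - s, ψ̄) = ∑_{n ≤ D⁴} ν(n) conj(ψ(n)) n^{s - 1}`, as a function of `s`. -/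
def FfunBar (D : ℕ) (χ : DirichletCharacter ℂ D) {p : ℕ} (ψ : DirichletCharacter ℂ p)
    (s : ℂ) : ℂ :=
  ∑ n ∈ Finset.Icc 1 (D ^ 4),
    nuF D χ n * (starRingEnd ℂ) (ψ (n : ZMod p)) * (n : ℂ) ^ (s - 1)

/-- The region `Ω`. -/
def InOmega (D : ℕ) (s : ℂ) : Prop :=
  |(s - s0 D).re| < 1 / 2 ∧ |(s - s0 D).im| < bigL1 D + 2

/-- The region `Ω₁`. -/
def InOmega1 (D : ℕ) (s : ℂ) : Prop :=
  1 / 2 - Real.log (bigL D) / (100 * bigL D) < s.re ∧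
    s.re < 1 + Real.log (bigL D) / (100 * bigL D) ∧
    |s.im - 2 * Real.pi * t0 D| < bigL1 D + 5

/-- The region `Ω₂`. -/
def InOmega2 (D : ℕ) (s : ℂ) : Prop :=
  1 / 2 - (bigL D)⁻¹ < s.re ∧ s.re < 1 + (bigL D)⁻¹ ∧
    |s.im - 2 * Real.pi * t0 D| < bigL1 D + 4

/-- `α = π / log P`. -/
def alphaD (D : ℕ) : ℝ := Real.pi / Real.log (bigP D)

/-- The region `Ω₃`. -/
def InOmega3 (D : ℕ) (s : ℂ) : Prop :=
  1 / 2 - alphaD D < s.re ∧ s.re < 1 + alphaD D ∧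
    |s.im - 2 * Real.pi * t0 D| < bigL1 D + 3

/-- The Gauss sum `τ(θ) = ∑_{a mod k} θ(a) e(a/k)`. -/
def tauSum {k : ℕ} (θ : DirichletCharacter ℂ k) : ℂ :=
  ∑ a ∈ Finset.range k,
    θ (a : ZMod k) * Complex.exp (2 * (Real.pi : ℂ) * Complex.I * (a : ℂ) / (k : ℂ))

/-- The factor `Z(s, θ)` from the functional equation. -/
def Zfun {k : ℕ} (θ : DirichletCharacter ℂ k) (s : ℂ) : ℂ :=
  if θ (-1) = 1 then
    tauSum θ * (Real.pi : ℂ) ^ (s - 1 / 2) * (k : ℂ) ^ (-s) *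
      Complex.Gamma ((1 - s) / 2) / Complex.Gamma (s / 2)
  else
    -Complex.I * tauSum θ * (Real.pi : ℂ) ^ (s - 1 / 2) * (k : ℂ) ^ (-s) *
      Complex.Gamma ((2 - s) / 2) / Complex.Gamma ((1 + s) / 2)

/-- The product character `χψ` modulo `D * p`, i.e. `n ↦ χ(n) ψ(n)`. -/
def chiPsi (D : ℕ) (χ : DirichletCharacter ℂ D) {p : ℕ} (ψ : DirichletCharacter ℂ p) :
    DirichletCharacter ℂ (D * p) :=
  DirichletCharacter.changeLevel (dvd_mul_right D p) χ *
    DirichletCharacter.changeLevel (dvd_mul_left p D) ψ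

/-- `Z̃(s, ψ) = Z(s, ψ) Z(s, χψ)`. -/
def Ztilde (D : ℕ) (χ : DirichletCharacter ℂ D) {p : ℕ} (ψ : DirichletCharacter ℂ p)
    (s : ℂ) : ℂ :=
  Zfun ψ s * Zfun (chiPsi D χ ψ) s

/-- `T = exp (𝓛 ^ 1.1)`. -/
def bigT (D : ℕ) : ℝ := Real.exp (bigL D ^ (1.1 : ℝ))

/-- `P₄ = P T⁻² t₀`. -/
def P4 (D : ℕ) : ℝ := bigP D * bigT D ^ (-2 : ℤ) * t0 D

/-- The smooth weight `g(x) = π^{-1/2} ∫_{-∞}^{𝓛^{15} log x} e^{-u²} du`. -/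
def gfun (D : ℕ) (x : ℝ) : ℝ :=
  Real.pi ^ (-(1 : ℝ) / 2) * ∫ u in Set.Iio (bigL D ^ 15 * Real.log x), Real.exp (-u ^ 2)

/-- `g*(y) = g(y)` for `y > 1/2`, and `0` otherwise. -/
def gstar (D : ℕ) (y : ℝ) : ℝ := if 1 / 2 < y then gfun D y else 0

/-- `K(s, ψ) = ∑_n ψ(n) n^{-s} g*(P₄ / n)`. -/
def Kfun (D : ℕ) {p : ℕ} (ψ : DirichletCharacter ℂ p) (s : ℂ) : ℂ :=
  ∑' n : ℕ, ψ (n : ZMod p) * (n : ℂ) ^ (-s) * ((gstar D (P4 D / n) : ℝ) : ℂ)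

/-- `N(1 - s, ψ̄) = ∑_n conj(ψ(n)) n^{s-1} g*(T² / n)`, as a function of `s`. -/
def Nfun (D : ℕ) {p : ℕ} (ψ : DirichletCharacter ℂ p) (s : ℂ) : ℂ :=
  ∑' n : ℕ,
    (starRingEnd ℂ) (ψ (n : ZMod p)) * (n : ℂ) ^ (s - 1) * ((gstar D (bigT D ^ 2 / n) : ℝ) : ℂ)

/-- `𝔞 = (6/π²) L'(1,χ)² ∏_{q ∣ D} q/(q+1)`. -/
def fraka (D : ℕ) (χ : DirichletCharacter ℂ D) : ℂ :=
  6 / (Real.pi : ℂ) ^ 2 * deriv (Lfun χ) 1 ^ 2 * ∏ q ∈ D.primeFactors, (q : ℂ) / ((q : ℂ) + 1)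


/-! For `n ≤ D⁴` the truncations in `F` and `G` are invisible and `ν ∗ υ = (χ ∗ 1) ∗ (μχ ∗ μ) = δ`,
so `F(s)G(s) - 1 = ∑_{D⁴ < n ≤ D⁸} ς(n) ψ(n) n^{-s}`. Writing `n^{-s} = n^{-s₀} n^{s₀-s}`, partial
summation expresses this through `X₄` and the weight `x^{s₀-s}`, which on `[1, D⁸]` has modulus at
most `𝓛` (because `Re(s₀ - s) < log 𝓛 / (100 𝓛)`) and derivative at most `|s₀ - s| 𝓛 / x`, with
`|s₀ - s| ≪ 𝓛^405`. Inequality (3.6) then gives `|F G - 1| ≪ 𝓛^{406 - 633}`. -/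

namespace ArithmeticFunction

variable {R : Type*}

theorem mul_apply_congr_of_le [Semiring R] {f f' g g' : ArithmeticFunction R} {K n : ℕ}
    (hn : n ≤ K) (hf : ∀ m ≤ K, f m = f' m) (hg : ∀ m ≤ K, g m = g' m) :
    (f * g) n = (f' * g') n := by
  simp only [mul_apply]
  refine Finset.sum_congr rfl fun x hx => ?_
  rw [hf _ ((Nat.divisor_le (Nat.fst_mem_divisors_of_mem_antidiagonal hx)).trans hn),
    hg _ ((Nat.divisor_le (Nat.snd_mem_divisors_of_mem_antidiagonal hx)).trans hn)]

theorem sum_Ioc_mul_sum_Ioc_of_map_mul [CommSemiring R] (f g : ArithmeticFunction R)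
    (e : ℕ → R) (he : ∀ a b, e (a * b) = e a * e b) {K : ℕ}
    (hf : ∀ n, K < n → f n = 0) (hg : ∀ n, K < n → g n = 0) :
    (∑ n ∈ Finset.Ioc 0 K, f n * e n) * (∑ n ∈ Finset.Ioc 0 K, g n * e n) =
      ∑ n ∈ Finset.Ioc 0 (K * K), (f * g) n * e n := by
  set fe : ArithmeticFunction R := ⟨fun n => f n * e n, by simp⟩
  set ge : ArithmeticFunction R := ⟨fun n => g n * e n, by simp⟩
  have twist : ∀ n, (f * g) n * e n = (fe * ge) n := by
    intro n
    rw [mul_apply, mul_apply, Finset.sum_mul]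
    refine Finset.sum_congr rfl fun x hx => ?_
    change _ = f x.1 * e x.1 * (g x.2 * e x.2)
    rw [← (Nat.mem_divisorsAntidiagonal.mp hx).1, he]
    ring
  have extend : ∀ h : ArithmeticFunction R, (∀ n, K < n → h n = 0) →
      ∑ n ∈ Finset.Ioc 0 K, h n * e n = ∑ n ∈ Finset.Ioc 0 (K * K), h n * e n := by
    intro h hh
    refine Finset.sum_subset (Finset.Ioc_subset_Ioc_right (Nat.le_mul_self K)) fun n hn hnK => ?_
    simp only [Finset.mem_Ioc, not_and, not_le] at hn hnK
    rw [hh n (hnK hn.1), zero_mul]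
  simp_rw [twist, sum_Ioc_mul_eq_sum_prod_filter, extend f hf, extend g hg,
    Finset.sum_mul_sum, ← Finset.sum_product']
  refine (Finset.sum_filter_of_ne fun x _ hx => Nat.mul_le_mul ?_ ?_).symm
  · by_contra! h
    exact hx (by simp [hf _ h])
  · by_contra! h
    exact hx (by simp [hg _ h])

end ArithmeticFunction

namespace DirichletCharacter

open ArithmeticFunction
open scoped ArithmeticFunction.Moebius ArithmeticFunction.zeta

variable {N : ℕ} (χ : DirichletCharacter ℂ N)

theorem toArithmeticFunction_mul_twist_moebius :
    toArithmeticFunction (χ ·) * toArithmeticFunction (fun n => χ n * (μ n : ℂ)) = 1 := by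
  ext n
  have h := congrFun (convolution_mul_moebius χ) n
  rw [LSeries.convolution, LSeries.delta] at h
  rw [one_apply]
  exact h

theorem nuF_eq_mul_zeta (n : ℕ) :
    nuF N χ n = (toArithmeticFunction (χ ·) * (ζ : ArithmeticFunction ℂ)) n := by
  rw [coe_mul_zeta_apply, nuF]
  refine Finset.sum_congr rfl fun d hd => ?_
  simp [toArithmeticFunction, Nat.ne_of_gt (Nat.pos_of_mem_divisors hd)]

theorem upsF_eq_mul_moebius (n : ℕ) :
    upsF N χ n =
      (toArithmeticFunction (fun n => χ n * (μ n : ℂ)) * (μ : ArithmeticFunction ℂ)) n := by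
  rw [mul_apply, upsF, Nat.sum_divisorsAntidiagonal
    (fun a b => toArithmeticFunction (fun n => χ n * (μ n : ℂ)) a * (μ : ArithmeticFunction ℂ) b)]
  refine Finset.sum_congr rfl fun d hd => ?_
  simp [toArithmeticFunction, Nat.ne_of_gt (Nat.pos_of_mem_divisors hd)]
  ring

end DirichletCharacter

section Truncations

open ArithmeticFunction
open scoped ArithmeticFunction.Moebius ArithmeticFunction.zeta

variable (D : ℕ) (χ : DirichletCharacter ℂ D)

theorem sigF_eq_nuT_mul_upsT (n : ℕ) : sigF D χ n = (nuT D χ * upsT D χ) n := by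
  rw [mul_apply, Nat.sum_divisorsAntidiagonal (fun a b => nuT D χ a * upsT D χ b), sigF]
  refine Finset.sum_congr rfl fun d hd => ?_
  have hd0 : d ≠ 0 := Nat.ne_of_gt (Nat.pos_of_mem_divisors hd)
  have hq0 : n / d ≠ 0 := Nat.ne_of_gt (Nat.div_pos (Nat.divisor_le hd) (Nat.pos_of_ne_zero hd0))
  by_cases h₁ : d ≤ D ^ 4 <;> by_cases h₂ : n / d ≤ D ^ 4 <;>
    simp [nuT, upsT, hd0, hq0, h₁, h₂]

theorem nuT_mul_upsT_apply_of_le {n : ℕ} (hn : n ≤ D ^ 4) :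
    (nuT D χ * upsT D χ) n = if n = 1 then 1 else 0 := by
  have hν : ∀ m ≤ D ^ 4,
      nuT D χ m = (toArithmeticFunction (χ ·) * (ζ : ArithmeticFunction ℂ)) m := by
    intro m hm
    rcases eq_or_ne m 0 with rfl | hm0
    · simp
    · simp [nuT, hm0, hm, χ.nuF_eq_mul_zeta]
  have hυ : ∀ m ≤ D ^ 4, upsT D χ m =
      (toArithmeticFunction (fun n => χ n * (μ n : ℂ)) * (μ : ArithmeticFunction ℂ)) m := by
    intro m hm
    rcases eq_or_ne m 0 with rfl | hm0
    · simp
    · simp [upsT, hm0, hm, χ.upsF_eq_mul_moebius]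
  rw [mul_apply_congr_of_le hn hν hυ, mul_mul_mul_comm,
    χ.toArithmeticFunction_mul_twist_moebius, coe_zeta_mul_coe_moebius, one_mul, one_apply]

end Truncations

section ProductFormula

variable (D : ℕ) (χ : DirichletCharacter ℂ D) {p : ℕ} (ψ : DirichletCharacter ℂ p)

theorem Ffun_eq_sum_nuT (s : ℂ) :
    Ffun D χ ψ s = ∑ n ∈ Finset.Ioc 0 (D ^ 4), nuT D χ n * (ψ n * (n : ℂ) ^ (-s)) := by
  refine Finset.sum_congr rfl fun n hn => ?_
  obtain ⟨hn1, hnD⟩ := Finset.mem_Icc.mp hn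
  simp [nuT, Nat.one_le_iff_ne_zero.mp hn1, hnD, mul_assoc]

theorem Gfun_eq_sum_upsT (s : ℂ) :
    Gfun D χ ψ s = ∑ n ∈ Finset.Ioc 0 (D ^ 4), upsT D χ n * (ψ n * (n : ℂ) ^ (-s)) := by
  refine Finset.sum_congr rfl fun n hn => ?_
  obtain ⟨hn1, hnD⟩ := Finset.mem_Icc.mp hn
  simp [upsT, Nat.one_le_iff_ne_zero.mp hn1, hnD, mul_assoc]

theorem Ffun_mul_Gfun_sub_one [NeZero D] (s : ℂ) :
    Ffun D χ ψ s * Gfun D χ ψ s - 1 =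
      ∑ n ∈ Finset.Ioc (D ^ 4) (D ^ 8), sigF D χ n * ψ n * (n : ℂ) ^ (-s) := by
  have hmul : ∀ a b : ℕ, ψ ↑(a * b) * ((a * b : ℕ) : ℂ) ^ (-s) =
      ψ a * (a : ℂ) ^ (-s) * (ψ b * (b : ℂ) ^ (-s)) := by
    intro a b
    rw [Nat.cast_mul, map_mul, Nat.cast_mul, Complex.natCast_mul_natCast_cpow]
    ring
  have hν : ∀ n, D ^ 4 < n → nuT D χ n = 0 := fun n hn => by simp [nuT, hn.not_ge]
  have hυ : ∀ n, D ^ 4 < n → upsT D χ n = 0 := fun n hn => by simp [upsT, hn.not_ge]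
  have hone : ∑ n ∈ Finset.Ioc 0 (D ^ 4), (nuT D χ * upsT D χ) n * (ψ n * (n : ℂ) ^ (-s)) = 1 := by
    rw [Finset.sum_congr rfl fun n hn => by
      rw [nuT_mul_upsT_apply_of_le D χ (Finset.mem_Ioc.mp hn).2, ite_mul, one_mul, zero_mul]]
    simp [Nat.one_le_iff_ne_zero, NeZero.ne]
  rw [Ffun_eq_sum_nuT, Gfun_eq_sum_upsT,
    ArithmeticFunction.sum_Ioc_mul_sum_Ioc_of_map_mul _ _ _ hmul hν hυ, ← pow_add,
    ← Finset.sum_Ioc_consecutive _ (Nat.zero_le _)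
      (Nat.pow_le_pow_right (Nat.pos_of_neZero D) (by norm_num : 4 ≤ 4 + 4)), hone,
    add_sub_cancel_left]
  simp only [sigF_eq_nuT_mul_upsT, mul_assoc]

end ProductFormula

section PartialSummation

open MeasureTheory

theorem hasDerivAt_ofReal_cpow_const_of_pos {t : ℝ} (ht : 0 < t) (w : ℂ) :
    HasDerivAt (fun t : ℝ => (t : ℂ) ^ w) (w * (t : ℂ) ^ (w - 1)) t := by
  simpa using ((hasDerivAt_id (t : ℂ)).cpow_const (c := w)
    (Complex.ofReal_mem_slitPlane.mpr ht)).comp_ofReal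

theorem norm_sum_Ioc_mul_cpow_le (c : ℕ → ℂ) (w : ℂ) {M N : ℕ} (hM : 0 < M) (hMN : M ≤ N)
    {B : ℝ} (hB : ∀ t ∈ Set.Icc (M : ℝ) N, t ^ w.re ≤ B) :
    ‖∑ k ∈ Finset.Ioc M N, c k * (k : ℂ) ^ w‖ ≤
      B * ‖∑ k ∈ Finset.Ioc M N, c k‖ +
        ‖w‖ * B * ∫ t in (M : ℝ)..N, ‖∑ k ∈ Finset.Ioc M ⌊t⌋₊, c k‖ / t := by
  set c' : ℕ → ℂ := fun k => if M < k then c k else 0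
  have hc' : ∀ n, ∑ k ∈ Finset.Icc 0 n, c' k = ∑ k ∈ Finset.Ioc M n, c k := by
    intro n
    rw [← Finset.sum_filter]
    congr 1
    ext k
    simp [and_comm]
  have hpos : ∀ t ∈ Set.Icc (M : ℝ) N, 0 < t := fun t ht =>
    (Nat.cast_pos.mpr hM).trans_le ht.1
  have hderiv : Set.EqOn (deriv fun t : ℝ => (t : ℂ) ^ w) (fun t => w * (t : ℂ) ^ (w - 1))
      (Set.Icc (M : ℝ) N) := fun t ht => (hasDerivAt_ofReal_cpow_const_of_pos (hpos t ht) w).deriv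
  have hderiv_int : IntegrableOn (deriv fun t : ℝ => (t : ℂ) ^ w) (Set.Icc (M : ℝ) N) := by
    refine (ContinuousOn.integrableOn_Icc ?_).congr_fun hderiv.symm measurableSet_Icc
    exact continuousOn_const.mul (Complex.continuous_ofReal.continuousOn.cpow_const
      fun t ht => Complex.ofReal_mem_slitPlane.mpr (hpos t ht))
  have abel := sum_mul_eq_sub_sub_integral_mul' c' hMN
    (fun t ht => (hasDerivAt_ofReal_cpow_const_of_pos (hpos t ht) w).differentiableAt) hderiv_int
  set X : ℝ → ℂ := fun t => ∑ k ∈ Finset.Ioc M ⌊t⌋₊, c k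
  have hX_int : IntegrableOn (fun t => ‖X t‖ / t) (Set.Ioc (M : ℝ) N) := by
    have h := Integrable.norm (integrableOn_mul_sum_Icc c' (m := 0) (Nat.cast_nonneg M)
      (g := fun t : ℝ => ((t⁻¹ : ℝ) : ℂ)) (ContinuousOn.integrableOn_Icc
        (Complex.continuous_ofReal.comp_continuousOn
          (continuousOn_inv₀.mono fun t ht => (hpos t ht).ne'))))
    refine (IntegrableOn.mono_set h Set.Ioc_subset_Icc_self).congr_fun (fun t ht => ?_)
      measurableSet_Ioc
    have ht := hpos t (Set.Ioc_subset_Icc_self ht)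
    simp [hc', X, div_eq_inv_mul, abs_of_pos ht]
  have hbound : ∀ t ∈ Set.Ioc (M : ℝ) N,
      ‖deriv (fun t : ℝ => (t : ℂ) ^ w) t * X t‖ ≤ ‖w‖ * B * (‖X t‖ / t) := by
    intro t ht
    have ht' := Set.Ioc_subset_Icc_self ht
    rw [hderiv ht', norm_mul, norm_mul, Complex.norm_cpow_eq_rpow_re_of_pos (hpos t ht'),
      Complex.sub_re, Complex.one_re, Real.rpow_sub_one (hpos t ht').ne']
    have hBt := hB t ht'
    calc ‖w‖ * (t ^ w.re / t) * ‖X t‖ = ‖w‖ * t ^ w.re * (‖X t‖ / t) := by ring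
      _ ≤ ‖w‖ * B * (‖X t‖ / t) := by
        gcongr
        exact div_nonneg (norm_nonneg _) (hpos t ht').le
  have hlhs : ∑ k ∈ Finset.Ioc M N, c k * (k : ℂ) ^ w =
      ∑ k ∈ Finset.Ioc M N, ((k : ℝ) : ℂ) ^ w * c' k := by
    refine Finset.sum_congr rfl fun k hk => ?_
    simp [c', (Finset.mem_Ioc.mp hk).1, mul_comm]
  simp only [hc', Finset.Ioc_self, Finset.sum_empty, mul_zero, sub_zero] at abel
  rw [hlhs, abel, intervalIntegral.integral_of_le (Nat.cast_le.mpr hMN), ← integral_const_mul]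
  refine (norm_sub_le _ _).trans (add_le_add ?_ ?_)
  · rw [norm_mul, Complex.norm_cpow_eq_rpow_re_of_pos (Nat.cast_pos.mpr (hM.trans_le hMN))]
    exact mul_le_mul_of_nonneg_right (hB N ⟨Nat.cast_le.mpr hMN, le_rfl⟩) (norm_nonneg _)
  · exact norm_integral_le_of_norm_le (hX_int.const_mul _)
      ((ae_restrict_iff' measurableSet_Ioc).mpr (ae_of_all _ hbound))

end PartialSummation

theorem Real.rpow_le_of_mul_log_le {t T L σ : ℝ} (ht : 1 ≤ t) (htT : t ≤ T) (hL : 1 ≤ L)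
    (hσ : σ * Real.log T ≤ Real.log L) : t ^ σ ≤ L := by
  have ht0 : 0 < t := zero_lt_one.trans_le ht
  rw [Real.rpow_def_of_pos ht0, ← Real.exp_log (zero_lt_one.trans_le hL), Real.exp_le_exp,
    mul_comm]
  rcases le_or_gt σ 0 with hσ0 | hσ0
  · exact (mul_nonpos_of_nonpos_of_nonneg hσ0 (Real.log_nonneg ht)).trans (Real.log_nonneg hL)
  · exact (mul_le_mul_of_nonneg_left (Real.log_le_log ht0 htT) hσ0.le).trans hσ

theorem two_le_bigL {D : ℕ} (hD : 8 ≤ D) : 2 ≤ bigL D := by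
  have he : Real.exp 2 < 8 := by
    have h := Real.exp_one_lt_d9
    rw [show (2 : ℝ) = 1 + 1 by norm_num, Real.exp_add]
    nlinarith [Real.exp_pos 1]
  rw [bigL, Real.le_log_iff_exp_le (by positivity)]
  exact he.le.trans (by exact_mod_cast hD)

section RegionOmega1

variable {D : ℕ} {s : ℂ}

theorem s0_sub_re_lt (hL : 2 ≤ bigL D) (hs : InOmega1 D s) :
    (s0 D - s).re * (100 * bigL D) < Real.log (bigL D) := by
  have h := hs.1
  rw [sub_lt_iff_lt_add, ← sub_lt_iff_lt_add', lt_div_iff₀ (by positivity)] at h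
  simpa [s0] using h

theorem norm_s0_sub_add_one_le (hL : 2 ≤ bigL D) (hs : InOmega1 D s) :
    ‖s0 D - s‖ + 1 ≤ 2 * bigL D ^ 405 := by
  obtain ⟨hre₁, hre₂, him⟩ := hs
  have hlog : Real.log (bigL D) / (100 * bigL D) ≤ 1 / 2 := by
    rw [div_le_iff₀ (by positivity)]
    nlinarith [Real.log_le_sub_one_of_pos (zero_lt_two.trans_le hL)]
  have hre : |(s0 D - s).re| ≤ 1 := by
    rw [abs_le]
    constructor <;> simp [s0] <;> linarith
  have him' : |(s0 D - s).im| < bigL D ^ 405 + 5 := by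
    simpa [s0, bigL1, abs_sub_comm] using him
  have hpow : 8 ≤ bigL D ^ 405 := calc
    (8 : ℝ) = 2 ^ 3 := by norm_num
    _ ≤ 2 ^ 405 := pow_le_pow_right₀ one_le_two (by norm_num)
    _ ≤ bigL D ^ 405 := pow_le_pow_left₀ zero_le_two hL 405
  linarith [Complex.norm_le_abs_re_add_abs_im (s0 D - s)]

theorem rpow_re_s0_sub_le (hL : 2 ≤ bigL D) (hs : InOmega1 D s) {t : ℝ} (ht : 1 ≤ t)
    (htD : t ≤ (D : ℝ) ^ 8) : t ^ (s0 D - s).re ≤ bigL D := by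
  refine Real.rpow_le_of_mul_log_le ht htD (one_le_two.trans hL) ?_
  have hlog : 0 ≤ Real.log (bigL D) := Real.log_nonneg (one_le_two.trans hL)
  rw [Real.log_pow, ← bigL]
  push_cast
  linarith [s0_sub_re_lt hL hs]

end RegionOmega1

theorem norm_Ffun_mul_Gfun_sub_one_le (D : ℕ) [NeZero D] (χ : DirichletCharacter ℂ D) {p : ℕ}
    (ψ : DirichletCharacter ℂ p) (s : ℂ) {B : ℝ}
    (hB : ∀ t ∈ Set.Icc ((D : ℝ) ^ 4) ((D : ℝ) ^ 8), t ^ (s0 D - s).re ≤ B) :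
    ‖Ffun D χ ψ s * Gfun D χ ψ s - 1‖ ≤
      B * ‖X4 D χ ψ ((D : ℝ) ^ 8)‖ +
        ‖s0 D - s‖ * B * ∫ x in ((D : ℝ) ^ 4)..((D : ℝ) ^ 8), ‖X4 D χ ψ x‖ / x := by
  have hsplit : ∀ n ∈ Finset.Ioc (D ^ 4) (D ^ 8), sigF D χ n * ψ n * (n : ℂ) ^ (-s) =
      sigF D χ n * ψ n * (n : ℂ) ^ (-s0 D) * (n : ℂ) ^ (s0 D - s) := by
    intro n hn
    have hn0 : (n : ℂ) ≠ 0 := Nat.cast_ne_zero.mpr (Nat.ne_zero_of_lt (Finset.mem_Ioc.mp hn).1)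
    rw [mul_assoc _ ((n : ℂ) ^ _), ← Complex.cpow_add _ _ hn0]
    ring_nf
  have hX4 : X4 D χ ψ ((D : ℝ) ^ 8) =
      ∑ n ∈ Finset.Ioc (D ^ 4) (D ^ 8), sigF D χ n * ψ n * (n : ℂ) ^ (-s0 D) := by
    rw [X4, ← Nat.cast_pow, Nat.floor_natCast]
  rw [Ffun_mul_Gfun_sub_one, Finset.sum_congr rfl hsplit, hX4]
  have h := norm_sum_Ioc_mul_cpow_le (fun n => sigF D χ n * ψ n * (n : ℂ) ^ (-s0 D)) (s0 D - s)
    (pow_pos (Nat.pos_of_neZero D) 4)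
    (Nat.pow_le_pow_right (Nat.pos_of_neZero D) (by norm_num : 4 ≤ 8))
    (B := B) (by simpa using hB)
  push_cast at h
  exact h

/-- For every `ψ ∈ Ψ₁` and every `s ∈ Ω₁`,
`|F(s,ψ) G(s,ψ) - 1| ≤ C 𝓛^{-227}`. -/
theorem statement8 :
    ∃ C : ℝ, 0 < C ∧ ∃ D₀ : ℕ, ∀ D : ℕ, D₀ ≤ D → ∀ χ : DirichletCharacter ℂ D,
      IsRealChar χ → χ.IsPrimitive →
        ∀ (p : ℕ) (ψ : DirichletCharacter ℂ p), MemPsi1 D χ ψ →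
          ∀ s : ℂ, InOmega1 D s →
            ‖Ffun D χ ψ s * Gfun D χ ψ s - 1‖ ≤ C * bigL D ^ (-227 : ℤ) := by
  refine ⟨2, two_pos, 8, fun D hD χ _ _ p ψ hψ s hs => ?_⟩
  have : NeZero D := ⟨by omega⟩
  have hL := two_le_bigL hD
  have hD1 : (1 : ℝ) ≤ D := by exact_mod_cast (by omega : 1 ≤ D)
  have hD4 : (1 : ℝ) ≤ (D : ℝ) ^ 4 := one_le_pow₀ hD1
  have hFG := norm_Ffun_mul_Gfun_sub_one_le D χ ψ s (B := bigL D)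
    fun t ht => rpow_re_s0_sub_le hL hs (hD4.trans ht.1) ht.2
  have hIneq3 : Ineq3 D χ ψ := hψ.2.2.2.2
  set a := ‖X4 D χ ψ ((D : ℝ) ^ 8)‖
  set b := ∫ x in ((D : ℝ) ^ 4)..((D : ℝ) ^ 8), ‖X4 D χ ψ x‖ / x
  have ha : 0 ≤ a := norm_nonneg _
  have hb : 0 ≤ b := intervalIntegral.integral_nonneg (pow_le_pow_right₀ hD1 (by norm_num))
    fun x hx => div_nonneg (norm_nonneg _) (by linarith [hx.1])
  have hw := norm_s0_sub_add_one_le hL hs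
  have hL0 : 0 < bigL D := by positivity
  calc ‖Ffun D χ ψ s * Gfun D χ ψ s - 1‖
      ≤ bigL D * a + ‖s0 D - s‖ * bigL D * b := hFG
    _ ≤ (‖s0 D - s‖ + 1) * bigL D * (a + b) := by
        nlinarith [mul_nonneg (mul_nonneg (norm_nonneg (s0 D - s)) hL0.le) ha]
    _ ≤ (2 * bigL D ^ 405) * bigL D * bigL D ^ (-633 : ℤ) := by
        gcongr
        exact hIneq3.le
    _ = 2 * bigL D ^ (-227 : ℤ) := by
        rw [mul_assoc 2, ← pow_succ, ← zpow_natCast, mul_assoc, ← zpow_add₀ hL0.ne']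
        norm_num
end
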